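/- Let V be a finite-dimensional complex Hilbert space with anticommuting square-zero operators Q⁺, Q⁻ satisfying the Hodge relations, and an sl(2)-triple Π, L, Λ (with Π† = Π, L† = Λ) acting such that [L, Q⁺] = Q⁻, [Λ, Q⁻] = Q⁺, [L, Q⁻] = 0, [Λ, Q⁺] = 0, and [Δ, L] = [Δ, Λ] = [Δ, Π] = 0. Then the operators Π, L, Λ preserve ker Δ = ker Q⁺ ∩ ker Q̄₊ ∩ ker Q⁻ ∩ ker Q̄₋, hence induce an sl(2)-action on the Q⁻-cohomology ker Q⁻/im Q⁻ via the harmonic-representative isomorphism. -/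

import Mathlib

/-!
Each Hodge relation writes `Δ` as `Q Q† + Q† Q`, and `⟪x, Δ x⟫ = ‖Q† x‖² + ‖Q x‖²` shows that
its kernel is `ker Q ∩ ker Q†`. Operators commuting with `Δ` preserve `ker Δ`. Since `Δ` is
self-adjoint, `V = ker Δ ⊕ im Δ`; writing a `Q⁻`-closed `x` as `y + Δ w` with `y` harmonic, the
term `Q⁻† Q⁻ w` is both `Q⁻`-closed and in `im Q⁻† = (ker Q⁻)ᗮ`, so it vanishes and
`x - y ∈ im Q⁻`. The harmonic representative is unique because `ker Δ ⊆ ker Q⁻† = (im Q⁻)ᗮ`.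
-/

open LinearMap (adjoint)

open LinearMap Submodule

theorem apply_mem_ker_of_comp_comm {R M : Type*} [Semiring R] [AddCommMonoid M] [Module R M]
    {f g : M →ₗ[R] M} (h : f ∘ₗ g = g ∘ₗ f) {x : M} (hx : x ∈ ker f) : g x ∈ ker f := by
  rw [mem_ker] at hx ⊢
  rw [← comp_apply, h, comp_apply, hx, map_zero]

section HodgeLaplacian

variable {𝕜 E : Type*} [RCLike 𝕜] [NormedAddCommGroup E] [InnerProductSpace 𝕜 E]
  [FiniteDimensional 𝕜 E]

noncomputable def hodgeLaplacian (A : E →ₗ[𝕜] E) : E →ₗ[𝕜] E :=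
  A ∘ₗ adjoint A + adjoint A ∘ₗ A

theorem isSymmetric_hodgeLaplacian (A : E →ₗ[𝕜] E) : (hodgeLaplacian A).IsSymmetric := by
  have h := (isPositive_adjoint_comp_self (adjoint A)).add (isPositive_adjoint_comp_self A)
  rw [adjoint_adjoint] at h
  exact h.isSymmetric

theorem inner_hodgeLaplacian_eq_norm_sq_add_norm_sq (A : E →ₗ[𝕜] E) (x : E) :
    inner 𝕜 x (hodgeLaplacian A x) = ((‖adjoint A x‖ ^ 2 + ‖A x‖ ^ 2 : ℝ) : 𝕜) := by
  rw [hodgeLaplacian, LinearMap.add_apply, comp_apply, comp_apply, inner_add_right,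
    ← adjoint_inner_left A (adjoint A x) x, adjoint_inner_right A x (A x),
    inner_self_eq_norm_sq_to_K, inner_self_eq_norm_sq_to_K]
  push_cast
  rfl

theorem ker_hodgeLaplacian (A : E →ₗ[𝕜] E) :
    ker (hodgeLaplacian A) = ker A ⊓ ker (adjoint A) := by
  ext x
  simp only [mem_inf, mem_ker]
  constructor
  · intro hx
    have hsum : ‖adjoint A x‖ ^ 2 + ‖A x‖ ^ 2 = 0 := by
      have h := inner_hodgeLaplacian_eq_norm_sq_add_norm_sq A x
      rw [hx, inner_zero_right] at h
      exact_mod_cast h.symm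
    obtain ⟨hadj, hA⟩ := (add_eq_zero_iff_of_nonneg (sq_nonneg _) (sq_nonneg _)).mp hsum
    exact ⟨norm_eq_zero.mp (pow_eq_zero_iff two_ne_zero |>.mp hA),
      norm_eq_zero.mp (pow_eq_zero_iff two_ne_zero |>.mp hadj)⟩
  · rintro ⟨hA, hadj⟩
    simp [hodgeLaplacian, hA, hadj]

theorem disjoint_ker_range_adjoint (A : E →ₗ[𝕜] E) : Disjoint (ker A) (range (adjoint A)) := by
  simpa only [orthogonal_ker] using (ker A).orthogonal_disjoint

theorem LinearMap.IsSymmetric.isCompl_ker_range {T : E →ₗ[𝕜] E} (hT : T.IsSymmetric) :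
    IsCompl (ker T) (range T) := by
  simpa only [hT.orthogonal_range] using (range T).isCompl_orthogonal.symm

theorem eq_of_harmonic_of_sub_mem_range {A : E →ₗ[𝕜] E} {y y' : E}
    (hy : hodgeLaplacian A y = 0) (hy' : hodgeLaplacian A y' = 0) (h : y - y' ∈ range A) :
    y = y' := by
  have hker : y - y' ∈ ker (adjoint A) := by
    have hdiff : y - y' ∈ ker (hodgeLaplacian A) := by simp [hy, hy']
    rw [ker_hodgeLaplacian] at hdiff
    exact hdiff.2
  have hdisj := disjoint_ker_range_adjoint (adjoint A)
  rw [adjoint_adjoint] at hdisj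
  exact sub_eq_zero.mp ((disjoint_iff_inf_le.mp hdisj) ⟨hker, h⟩)

theorem exists_harmonic_add_range {A : E →ₗ[𝕜] E} (hA : A ∘ₗ A = 0) {x : E} (hx : A x = 0) :
    ∃ y : E, hodgeLaplacian A y = 0 ∧ ∃ z : E, x = y + A z := by
  obtain ⟨y, hy, _, ⟨w, rfl⟩, rfl⟩ :=
    mem_sup.mp ((isSymmetric_hodgeLaplacian A).isCompl_ker_range.sup_eq_top ▸ mem_top (x := x))
  rw [mem_ker] at hy
  have hyA : A y = 0 := ((ker_hodgeLaplacian A ▸ mem_ker.mpr hy) : y ∈ ker A ⊓ _).1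
  have hAA (v : E) : A (A v) = 0 := by rw [← comp_apply, hA, LinearMap.zero_apply]
  have hcoexact : adjoint A (A w) = 0 := by
    refine (disjoint_iff_inf_le.mp (disjoint_ker_range_adjoint A)) ⟨?_, A w, rfl⟩
    simpa [hodgeLaplacian, hyA, hAA] using hx
  exact ⟨y, hy, adjoint A w, by simp [hodgeLaplacian, hcoexact]⟩

theorem existsUnique_harmonic_add_range {A : E →ₗ[𝕜] E} (hA : A ∘ₗ A = 0) {x : E}
    (hx : A x = 0) : ∃! y : E, hodgeLaplacian A y = 0 ∧ ∃ z : E, x = y + A z := by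
  obtain ⟨y, hy, z, rfl⟩ := exists_harmonic_add_range hA hx
  refine ⟨y, ⟨hy, z, rfl⟩, fun y' ⟨hy', z', hx'⟩ => ?_⟩
  refine eq_of_harmonic_of_sub_mem_range hy' hy ⟨z - z', ?_⟩
  rw [map_sub, sub_eq_sub_iff_add_eq_add, add_comm (A z), hx']

end HodgeLaplacian

theorem stmt15_general {V : Type*} [NormedAddCommGroup V] [InnerProductSpace ℂ V]
    [FiniteDimensional ℂ V]
    (Qp Qm Pi L Λ : V →ₗ[ℂ] V)
    (hQm : Qm ∘ₗ Qm = 0)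
    -- Hodge relations [Qᵅ, (Qᵝ)†] = δᵅᵝ Δ
    (Δ : V →ₗ[ℂ] V)
    (hΔp : Qp ∘ₗ adjoint Qp + adjoint Qp ∘ₗ Qp = Δ)
    (hΔm : Qm ∘ₗ adjoint Qm + adjoint Qm ∘ₗ Qm = Δ)
    (hΔL : Δ ∘ₗ L = L ∘ₗ Δ) (hΔΛ : Δ ∘ₗ Λ = Λ ∘ₗ Δ) (hΔPi : Δ ∘ₗ Pi = Pi ∘ₗ Δ) :
    LinearMap.ker Δ = LinearMap.ker Qp ⊓ LinearMap.ker (adjoint Qp) ⊓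
      LinearMap.ker Qm ⊓ LinearMap.ker (adjoint Qm) ∧
    (∀ x ∈ LinearMap.ker Δ, Pi x ∈ LinearMap.ker Δ) ∧
    (∀ x ∈ LinearMap.ker Δ, L x ∈ LinearMap.ker Δ) ∧
    (∀ x ∈ LinearMap.ker Δ, Λ x ∈ LinearMap.ker Δ) ∧
    (∀ x : V, Qm x = 0 → ∃! y : V, Δ y = 0 ∧ ∃ z : V, x = y + Qm z) := by
  have hkerp : ker Δ = ker Qp ⊓ ker (adjoint Qp) := by
    rw [← hΔp]; exact ker_hodgeLaplacian Qp
  have hkerm : ker Δ = ker Qm ⊓ ker (adjoint Qm) := by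
    rw [← hΔm]; exact ker_hodgeLaplacian Qm
  refine ⟨by rw [inf_assoc, ← hkerp, ← hkerm, inf_idem],
    fun _ => apply_mem_ker_of_comp_comm hΔPi, fun _ => apply_mem_ker_of_comp_comm hΔL,
    fun _ => apply_mem_ker_of_comp_comm hΔΛ, ?_⟩
  subst hΔm
  exact fun _ => existsUnique_harmonic_add_range hQm

/-- Lefschetz `sl(2)` on harmonic space: under the Hodge relations and the
stated `sl(2)` commutation relations, `ker Δ = ker Q⁺ ∩ ker Q̄₊ ∩ ker Q⁻ ∩ ker Q̄₋`
and the operators `Π, L, Λ` preserve `ker Δ`, hence induce an `sl(2)`-action on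
the `Q⁻`-cohomology via the harmonic-representative isomorphism. -/
theorem stmt15 {V : Type*} [NormedAddCommGroup V] [InnerProductSpace ℂ V]
    [FiniteDimensional ℂ V]
    (Qp Qm Pi L Λ : V →ₗ[ℂ] V)
    (hQp : Qp ∘ₗ Qp = 0) (hQm : Qm ∘ₗ Qm = 0)
    (hanti : Qp ∘ₗ Qm + Qm ∘ₗ Qp = 0)
    (hPisa : adjoint Pi = Pi) (hLΛ : adjoint L = Λ)
    -- Hodge relations [Qᵅ, (Qᵝ)†] = δᵅᵝ Δ
    (Δ : V →ₗ[ℂ] V)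
    (hΔp : Qp ∘ₗ adjoint Qp + adjoint Qp ∘ₗ Qp = Δ)
    (hΔm : Qm ∘ₗ adjoint Qm + adjoint Qm ∘ₗ Qm = Δ)
    (hcrosspm : Qp ∘ₗ adjoint Qm + adjoint Qm ∘ₗ Qp = 0)
    (hcrossmp : Qm ∘ₗ adjoint Qp + adjoint Qp ∘ₗ Qm = 0)
    -- sl(2) action
    (hLQp : L ∘ₗ Qp - Qp ∘ₗ L = Qm)
    (hΛQm : Λ ∘ₗ Qm - Qm ∘ₗ Λ = Qp)
    (hLQm : L ∘ₗ Qm - Qm ∘ₗ L = 0)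
    (hΛQp : Λ ∘ₗ Qp - Qp ∘ₗ Λ = 0)
    (hΔL : Δ ∘ₗ L = L ∘ₗ Δ) (hΔΛ : Δ ∘ₗ Λ = Λ ∘ₗ Δ) (hΔPi : Δ ∘ₗ Pi = Pi ∘ₗ Δ) :
    LinearMap.ker Δ = LinearMap.ker Qp ⊓ LinearMap.ker (adjoint Qp) ⊓
      LinearMap.ker Qm ⊓ LinearMap.ker (adjoint Qm) ∧
    (∀ x ∈ LinearMap.ker Δ, Pi x ∈ LinearMap.ker Δ) ∧
    (∀ x ∈ LinearMap.ker Δ, L x ∈ LinearMap.ker Δ) ∧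
    (∀ x ∈ LinearMap.ker Δ, Λ x ∈ LinearMap.ker Δ) ∧
    (∀ x : V, Qm x = 0 → ∃! y : V, Δ y = 0 ∧ ∃ z : V, x = y + Qm z) :=
  stmt15_general Qp Qm Pi L Λ hQm Δ hΔp hΔm hΔL hΔΛ hΔPi
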